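/- arXiv:0705.3448 — 7 statements merged into one kernel-verified Lean document; each statement's English description precedes it below -/
import Mathlib

section
/- In the hyperbolic plane, let X, Y be points on the same side of a line m with feet of perpendiculars to m, and let Z be a point on segment XY. If for the perpendicular distances d1 = d(X,m), d2 = d(Z,m), d3 = d(Y,m) and the distances c1 = d(X,Z), c2 = d(Y,Z) along a line meeting m at angle θ at distance a0 from X one has sinh(d1) = sin(θ)·sinh(a0), sinh(d2) = sin(θ)·sinh(a0 + c1), sinh(d3) = sin(θ)·sinh(a0 + c1 + c2), and x·sinh(c1) = y·sinh(c2), then (x·cosh(c1) + y·cosh(c2))·sinh(d2) = x·sinh(d1) + y·sinh(d3). -/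
open Real

/-! The moment of a mass about `m` is its weight times `sinh` of its distance to `m`, and along the
transversal this is `sin θ · sinh` of the position. Centred at `Z`, the addition formula for `sinh`
splits the moments of `X` and `Y` into a `cosh`-part proportional to `sinh` at `Z` and a `sinh`-part
weighted by `± cosh` at `Z`; the balance condition `x sinh c₁ = y sinh c₂` makes the latter cancel. -/

theorem mul_sinh_sub_add_mul_sinh_add_of_balance {x y b c₁ c₂ : ℝ}
    (hbal : x * sinh c₁ = y * sinh c₂) :
    x * sinh (b - c₁) + y * sinh (b + c₂) = (x * cosh c₁ + y * cosh c₂) * sinh b := by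
  rw [sinh_sub, sinh_add]
  linear_combination -cosh b * hbal

theorem moment_additivity_intersecting_general (x y θ a0 c1 c2 d1 d2 d3 : ℝ)
    (h1 : Real.sinh d1 = Real.sin θ * Real.sinh a0)
    (h2 : Real.sinh d2 = Real.sin θ * Real.sinh (a0 + c1))
    (h3 : Real.sinh d3 = Real.sin θ * Real.sinh (a0 + c1 + c2))
    (hbal : x * Real.sinh c1 = y * Real.sinh c2) :
    (x * Real.cosh c1 + y * Real.cosh c2) * Real.sinh d2
      = x * Real.sinh d1 + y * Real.sinh d3 := by
  have hsplit := mul_sinh_sub_add_mul_sinh_add_of_balance (b := a0 + c1) hbal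
  rw [add_sub_cancel_right] at hsplit
  rw [h1, h2, h3]
  linear_combination -sin θ * hsplit

/-- Theorem 3.4 (intersecting case): additivity of moments with respect to a line `m`
meeting the line of the two point-masses at angle `θ`, where
`sinh(dist to m) = sin θ · sinh(distance along the transversal)`. -/
theorem moment_additivity_intersecting (x y θ a0 c1 c2 d1 d2 d3 : ℝ)
    (hx : 0 < x) (hy : 0 < y)
    (h1 : Real.sinh d1 = Real.sin θ * Real.sinh a0)
    (h2 : Real.sinh d2 = Real.sin θ * Real.sinh (a0 + c1))
    (h3 : Real.sinh d3 = Real.sin θ * Real.sinh (a0 + c1 + c2))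
    (hbal : x * Real.sinh c1 = y * Real.sinh c2) :
    (x * Real.cosh c1 + y * Real.cosh c2) * Real.sinh d2
      = x * Real.sinh d1 + y * Real.sinh d3 :=
  moment_additivity_intersecting_general x y θ a0 c1 c2 d1 d2 d3 h1 h2 h3 hbal
end

section
/- For x, y > 0 and real numbers a0, a1, a2 with x·sinh(a1) = y·sinh(a2), one has (x·cosh(a1) + y·cosh(a2))·cosh(a0 + a1) = x·cosh(a0) + y·cosh(a0 + a1 + a2). -/
open Real

theorem mul_cosh_sub_add_mul_cosh_add (x y s t b : ℝ) :
    x * cosh (b - s) + y * cosh (b + t)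
      = (x * cosh s + y * cosh t) * cosh b + (y * sinh t - x * sinh s) * sinh b := by
  rw [cosh_sub, cosh_add]
  ring

theorem moment_additivity_ultraparallel_general (x y a0 a1 a2 : ℝ)
    (hbal : x * Real.sinh a1 = y * Real.sinh a2) :
    (x * Real.cosh a1 + y * Real.cosh a2) * Real.cosh (a0 + a1)
      = x * Real.cosh a0 + y * Real.cosh (a0 + a1 + a2) := by
  have h := mul_cosh_sub_add_mul_cosh_add x y a1 a2 (a0 + a1)
  rw [add_sub_cancel_right, hbal, sub_self, zero_mul, add_zero] at h
  exact h.symm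

/-- Theorem 3.4 (ultraparallel case): the `cosh` identity giving additivity of moments
with respect to a line admitting a common perpendicular with the line of the masses. -/
theorem moment_additivity_ultraparallel (x y a0 a1 a2 : ℝ) (hx : 0 < x) (hy : 0 < y)
    (hbal : x * Real.sinh a1 = y * Real.sinh a2) :
    (x * Real.cosh a1 + y * Real.cosh a2) * Real.cosh (a0 + a1)
      = x * Real.cosh a0 + y * Real.cosh (a0 + a1 + a2) :=
  moment_additivity_ultraparallel_general x y a0 a1 a2 hbal
end

section
/- For x, y > 0 and real numbers a0, a1, a2 with x·sinh(a1) = y·sinh(a2), one has (x·cosh(a1) + y·cosh(a2))·sinh(a0 + a1) = x·sinh(a0) + y·sinh(a0 + a1 + a2). -/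
open Real

theorem mul_sinh_sub_add_mul_sinh_add (x y a b c : ℝ) :
    x * sinh (b - a) + y * sinh (b + c)
      = (x * cosh a + y * cosh c) * sinh b + (y * sinh c - x * sinh a) * cosh b := by
  rw [sinh_sub, sinh_add]
  ring

theorem moment_additivity_sinh_general (x y a0 a1 a2 : ℝ)
    (hbal : x * Real.sinh a1 = y * Real.sinh a2) :
    (x * Real.cosh a1 + y * Real.cosh a2) * Real.sinh (a0 + a1)
      = x * Real.sinh a0 + y * Real.sinh (a0 + a1 + a2) := by
  have h := mul_sinh_sub_add_mul_sinh_add x y a1 (a0 + a1) a2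
  rw [add_sub_cancel_right, ← hbal, sub_self, zero_mul, add_zero] at h
  exact h.symm

/-- Theorem 3.4 (intersecting case, reduced form): the `sinh` identity giving
additivity of moments when the line meets the line through the two point-masses. -/
theorem moment_additivity_sinh (x y a0 a1 a2 : ℝ) (hx : 0 < x) (hy : 0 < y)
    (hbal : x * Real.sinh a1 = y * Real.sinh a2) :
    (x * Real.cosh a1 + y * Real.cosh a2) * Real.sinh (a0 + a1)
      = x * Real.sinh a0 + y * Real.sinh (a0 + a1 + a2) :=
  moment_additivity_sinh_general x y a0 a1 a2 hbal
end

section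
/- In the upper half-plane model of the hyperbolic plane, the binary operation * on point-masses defined by (X,x)*(Y,y) = (Z,z), where Z is the point on segment XY with x·sinh(d(X,Z)) = y·sinh(d(Y,Z)) and z = x·cosh(d(X,Z)) + y·cosh(d(Y,Z)), is commutative and associative. -/
/-!
Map the upper half-plane onto the hyperboloid `⟪v, v⟫ = 1, v₀ > 0` of Minkowski space `ℝ^{1,2}`,
so that `⟪ι z, ι w⟫ = cosh d(z, w)`. Using `cosh (a + b) = cosh a cosh b + sinh a sinh b`, the
centroid conditions make `V = x ι X + y ι Y - z ι Z` Minkowski-orthogonal to `ι X`, `ι Y` and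
`ι Z`, hence null; a null vector orthogonal to a timelike one vanishes. So the centroid `(Z, z)`
is characterised by `z ι Z = x ι X + y ι Y`, and commutativity and associativity are those of
vector addition, since `t ι T` determines `t > 0` and `T`.
-/

open Real UpperHalfPlane

noncomputable section

/-- `Z` lies on the geodesic segment from `X` to `Y` (hyperbolic betweenness). -/
def HBtw (X Z Y : ℍ) : Prop := dist X Z + dist Z Y = dist X Y

/-- `(Z, z)` is the hyperbolic centroid of the point-masses `(X, x)` and `(Y, y)`:
`Z` lies between `X` and `Y`, the moments about `Z` balance, and
`z = x·cosh d(X,Z) + y·cosh d(Y,Z)`. -/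
def IsCentroid (X : ℍ) (x : ℝ) (Y : ℍ) (y : ℝ) (Z : ℍ) (z : ℝ) : Prop :=
  HBtw X Z Y ∧ x * Real.sinh (dist X Z) = y * Real.sinh (dist Y Z) ∧
    z = x * Real.cosh (dist X Z) + y * Real.cosh (dist Y Z)

def minkowski : LinearMap.BilinForm ℝ (Fin 3 → ℝ) :=
  Matrix.toBilin' (Matrix.diagonal ![1, -1, -1])

lemma minkowski_apply (u v : Fin 3 → ℝ) :
    minkowski u v = u 0 * v 0 - u 1 * v 1 - u 2 * v 2 := by
  simp [minkowski, Matrix.toBilin'_apply', dotProduct, Fin.sum_univ_three, Matrix.mulVec_diagonal]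
  ring

lemma eq_zero_of_minkowski_self_eq_zero_of_orthogonal {u v : Fin 3 → ℝ}
    (hv : 0 < minkowski v v) (hu : minkowski u u = 0) (huv : minkowski u v = 0) : u = 0 := by
  rw [minkowski_apply] at hu huv hv
  have hcs : (u 1 * v 1 + u 2 * v 2) ^ 2 ≤ (u 1 ^ 2 + u 2 ^ 2) * (v 1 ^ 2 + v 2 ^ 2) := by
    nlinarith [sq_nonneg (u 1 * v 2 - u 2 * v 1)]
  have h0sq : u 0 ^ 2 * (v 0 * v 0 - v 1 * v 1 - v 2 * v 2) ≤ 0 := by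
    have hv0 : u 0 * v 0 = u 1 * v 1 + u 2 * v 2 := by linarith
    calc u 0 ^ 2 * (v 0 * v 0 - v 1 * v 1 - v 2 * v 2)
        = (u 1 * v 1 + u 2 * v 2) ^ 2 - (u 1 ^ 2 + u 2 ^ 2) * (v 1 ^ 2 + v 2 ^ 2) := by
          rw [← hv0]; linear_combination (-(v 1 ^ 2 + v 2 ^ 2)) * hu
      _ ≤ 0 := sub_nonpos.mpr hcs
  have h0 : u 0 = 0 := by
    have : u 0 ^ 2 ≤ 0 := nonpos_of_mul_nonpos_left h0sq hv
    nlinarith [sq_nonneg (u 0)]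
  have h1 : u 1 = 0 := by nlinarith [sq_nonneg (u 1), sq_nonneg (u 2)]
  have h2 : u 2 = 0 := by nlinarith [sq_nonneg (u 1), sq_nonneg (u 2)]
  ext i
  fin_cases i <;> assumption

def toHyperboloid (w : ℍ) : Fin 3 → ℝ :=
  ![(w.re ^ 2 + w.im ^ 2 + 1) / (2 * w.im), w.re / w.im, (w.re ^ 2 + w.im ^ 2 - 1) / (2 * w.im)]

lemma minkowski_toHyperboloid (z w : ℍ) :
    minkowski (toHyperboloid z) (toHyperboloid w) = cosh (dist z w) := by
  have hz := z.im_pos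
  have hw := w.im_pos
  rw [minkowski_apply, cosh_dist, Complex.dist_eq, Complex.sq_norm, Complex.normSq_apply]
  simp only [toHyperboloid, Matrix.cons_val_zero, Matrix.cons_val_one, Matrix.cons_val_two,
    Matrix.head_cons, Matrix.tail_cons, Complex.sub_re, Complex.sub_im, coe_re, coe_im]
  field_simp
  ring

lemma minkowski_toHyperboloid_self (w : ℍ) : minkowski (toHyperboloid w) (toHyperboloid w) = 1 := by
  rw [minkowski_toHyperboloid, dist_self, cosh_zero]

lemma toHyperboloid_injective : Function.Injective toHyperboloid := by
  intro z w h
  have h0 := congrFun h 0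
  have h1 := congrFun h 1
  have h2 := congrFun h 2
  simp only [toHyperboloid, Matrix.cons_val_zero, Matrix.cons_val_one, Matrix.cons_val_two,
    Matrix.head_cons, Matrix.tail_cons] at h0 h1 h2
  have hz := z.im_pos
  have hw := w.im_pos
  have him : z.im = w.im := by
    have h02 : 1 / z.im = 1 / w.im := by
      convert congrArg₂ (· - ·) h0 h2 using 1 <;> field_simp <;> ring
    rwa [one_div, one_div, inv_inj] at h02
  rw [him, div_left_inj' hw.ne'] at h1
  exact ext_re_im h1 him

lemma smul_toHyperboloid_inj {T T' : ℍ} {t t' : ℝ} (ht : 0 < t) (ht' : 0 < t') :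
    t • toHyperboloid T = t' • toHyperboloid T' ↔ T = T' ∧ t = t' := by
  refine ⟨fun h => ?_, fun ⟨hT, htt⟩ => hT ▸ htt ▸ rfl⟩
  have hsq : t ^ 2 = t' ^ 2 := by
    have := congrArg (fun v => minkowski v v) h
    simpa [minkowski_toHyperboloid_self, sq] using this
  have htt : t = t' := (pow_left_inj₀ ht.le ht'.le two_ne_zero).mp hsq
  subst htt
  exact ⟨toHyperboloid_injective (smul_right_injective _ ht.ne' h), rfl⟩

namespace IsCentroid

variable {X Y Z : ℍ} {x y z : ℝ}

lemma symm (h : IsCentroid X x Y y Z z) : IsCentroid Y y X x Z z := by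
  obtain ⟨hB, hm, hz⟩ := h
  refine ⟨?_, hm.symm, by rw [hz, add_comm]⟩
  unfold HBtw at hB ⊢
  rw [dist_comm Y Z, dist_comm Z X, dist_comm Y X]
  linarith

lemma mass_pos (h : IsCentroid X x Y y Z z) (hx : 0 < x) (hy : 0 < y) : 0 < z := by
  rw [h.2.2]
  positivity

lemma minkowski_left_eq_zero (h : IsCentroid X x Y y Z z) :
    minkowski (x • toHyperboloid X + y • toHyperboloid Y - z • toHyperboloid Z)
      (toHyperboloid X) = 0 := by
  obtain ⟨hB, hm, hz⟩ := h
  simp only [map_sub, map_add, map_smul, LinearMap.sub_apply, LinearMap.add_apply,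
    LinearMap.smul_apply, smul_eq_mul, minkowski_toHyperboloid]
  rw [dist_self, dist_comm Y X, ← hB, dist_comm Z X, cosh_add, dist_comm Z Y, cosh_zero]
  linear_combination (-cosh (dist X Z)) * hz - x * cosh_sq (dist X Z) - sinh (dist X Z) * hm

lemma smul_add_smul (h : IsCentroid X x Y y Z z) :
    x • toHyperboloid X + y • toHyperboloid Y = z • toHyperboloid Z := by
  set V := x • toHyperboloid X + y • toHyperboloid Y - z • toHyperboloid Z
  have hX : minkowski V (toHyperboloid X) = 0 := h.minkowski_left_eq_zero
  have hY : minkowski V (toHyperboloid Y) = 0 := by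
    rw [show V = y • toHyperboloid Y + x • toHyperboloid X - z • toHyperboloid Z by
      simp only [V, add_comm]]
    exact h.symm.minkowski_left_eq_zero
  have hZ : minkowski V (toHyperboloid Z) = 0 := by
    simp only [V, map_sub, map_add, map_smul, LinearMap.sub_apply, LinearMap.add_apply,
      LinearMap.smul_apply, smul_eq_mul, minkowski_toHyperboloid, dist_self, cosh_zero]
    linear_combination -h.2.2
  have hV : minkowski V V = 0 := by
    conv_lhs => arg 2; simp only [V]
    simp only [map_sub, map_add, map_smul, smul_eq_mul, hX, hY, hZ, mul_zero, sub_zero, add_zero]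
  exact sub_eq_zero.mp <| eq_zero_of_minkowski_self_eq_zero_of_orthogonal
    (by rw [minkowski_toHyperboloid_self]; exact one_pos) hV hX

end IsCentroid

/-- Proposition 3.3: the binary centroid operation `*` on point-masses in the
hyperbolic plane (here, the upper half-plane model) is commutative and associative. -/
theorem centroid_comm_assoc :
    (∀ (X Y Z : ℍ) (x y z : ℝ), 0 < x → 0 < y →
      (IsCentroid X x Y y Z z ↔ IsCentroid Y y X x Z z)) ∧
    (∀ (X Y Z : ℍ) (x y z : ℝ), 0 < x → 0 < y → 0 < z →
      ∀ (R : ℍ) (r : ℝ) (T : ℍ) (t : ℝ) (P : ℍ) (p : ℝ) (T' : ℍ) (t' : ℝ),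
        IsCentroid X x Y y R r → IsCentroid R r Z z T t →
        IsCentroid Y y Z z P p → IsCentroid X x P p T' t' →
          T = T' ∧ t = t') := by
  refine ⟨fun _ _ _ _ _ _ _ _ => ⟨IsCentroid.symm, IsCentroid.symm⟩, ?_⟩
  intro X Y Z x y z hx hy hz R r T t P p T' t' hXY hRZ hYZ hXP
  have hr := hXY.mass_pos hx hy
  have hp := hYZ.mass_pos hy hz
  refine (smul_toHyperboloid_inj (hRZ.mass_pos hr hz) (hXP.mass_pos hx hp)).mp ?_
  rw [← hRZ.smul_add_smul, ← hXP.smul_add_smul, ← hXY.smul_add_smul, ← hYZ.smul_add_smul,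
    add_assoc]

end
end

section
/- Two point-masses (X,x) and (Y,y) in the hyperbolic plane have equal unsigned moments with respect to a line m that intersects the line XY if and only if m passes through their internal centroid or their external centroid. -/
open Real UpperHalfPlane

noncomputable section

/-- A hyperbolic line in the upper half-plane model: a vertical ray or a
semicircle centered on the real axis. -/
inductive HLine : Type
  | vertical (a : ℝ) : HLine
  | circle (c r : ℝ) (hr : 0 < r) : HLine

/-- The set of points of a hyperbolic line. -/
def HLine.carrier : HLine → Set ℍ
  | .vertical a => {z : ℍ | (z : ℂ).re = a}
  | .circle c r _ => {z : ℍ | ‖(z : ℂ) - (c : ℂ)‖ = r}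

/-- The side function of a (directed) hyperbolic line: `1` on one open half-plane,
`-1` on the other, `0` on the line itself. -/
def HLine.sgn : HLine → ℍ → ℝ
  | .vertical a, z => Real.sign ((z : ℂ).re - a)
  | .circle c r _, z => Real.sign (‖(z : ℂ) - (c : ℂ)‖ - r)

/-!
An element of `SL(2, ℝ)` carries any hyperbolic line onto the imaginary axis while preserving
distances, betweenness and distances to lines, so `m` may be taken to be the imaginary axis.
There `sinh d(z, m) = |re z| / im z`. Three points on one hyperbolic line satisfy the cosh
addition formula, which in coordinates says that `collinearDet` vanishes; for `Z` on `m` this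
gives `sinh d(X, m) · sinh d(Y, Z) = sinh d(Y, m) · sinh d(X, Z)`, both quotients
`sinh d(·, m) / sinh d(·, Z)` being the sine of the angle between `m` and the line `XY`.
If `m` meets `XY` at `W` and `X ∉ m`, this turns equal moments into
`x sinh d(X, W) = y sinh d(Y, W)` and back. If `X ∈ m`, equal moments force `Y ∈ m`, and the
intermediate value theorem along `m` gives a balancing point between `X` and `Y`.
-/

open scoped MatrixGroups Pointwise

lemma Metric.infDist_eq_dist_of_forall_le {α : Type*} [PseudoMetricSpace α] {s : Set α}
    {x y : α} (hy : y ∈ s) (h : ∀ z ∈ s, dist x y ≤ dist x z) :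
    Metric.infDist x s = dist x y := by
  refine le_antisymm (Metric.infDist_le_dist_of_mem hy) (not_lt.1 fun hlt => ?_)
  obtain ⟨z, hz, hzy⟩ := (Metric.infDist_lt_iff ⟨y, hy⟩).1 hlt
  exact (h z hz).not_gt hzy

lemma Real.sq_cosh_add_sub_mul (a b : ℝ) :
    (cosh (a + b) - cosh a * cosh b) ^ 2 = (cosh a ^ 2 - 1) * (cosh b ^ 2 - 1) := by
  rw [cosh_add, cosh_sq', cosh_sq']
  ring

section Balance

variable {α : Type*} [PseudoMetricSpace α] {γ : ℝ → α}

lemma Isometry.dist_add_dist_of_mem_uIcc (hγ : Isometry γ) {s u v : ℝ}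
    (hv : v ∈ Set.uIcc s u) :
    dist (γ s) (γ v) + dist (γ v) (γ u) = dist (γ s) (γ u) := by
  simp only [hγ.dist_eq]
  exact dist_add_dist_of_mem_segment (segment_eq_uIcc s u ▸ hv)

lemma Isometry.exists_mul_sinh_dist_eq (hγ : Isometry γ) (s u : ℝ) {x y : ℝ} (hx : 0 ≤ x)
    (hy : 0 ≤ y) :
    ∃ v ∈ Set.uIcc s u, x * sinh (dist (γ s) (γ v)) = y * sinh (dist (γ u) (γ v)) := by
  let f v := x * sinh (dist (γ s) (γ v)) - y * sinh (dist (γ u) (γ v))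
  have hf : Continuous f := by
    have := hγ.continuous
    fun_prop
  have hfs : f s ≤ 0 := by
    simp only [f, dist_self, sinh_zero, mul_zero, zero_sub, neg_nonpos]
    positivity
  have hfu : 0 ≤ f u := by
    simp only [f, dist_self, sinh_zero, mul_zero, sub_zero]
    positivity
  obtain ⟨v, hv, hfv⟩ := intermediate_value_uIcc hf.continuousOn (Set.mem_uIcc_of_le hfs hfu)
  exact ⟨v, hv, sub_eq_zero.1 hfv⟩

end Balance

lemma UpperHalfPlane.sq_norm_coe (z : ℍ) : ‖(z : ℂ)‖ ^ 2 = z.re ^ 2 + z.im ^ 2 := by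
  rw [Complex.sq_norm, Complex.normSq_apply, coe_re, coe_im]
  ring

def imAxis : Set ℍ := {z | z.re = 0}

def HCollinear (X Y Z : ℍ) : Prop := HBtw X Z Y ∨ HBtw Z X Y ∨ HBtw X Y Z

/-- Vanishes iff the points `(re z, |z|²)` for `z = X, Y, Z` are collinear in `ℝ²`, i.e. iff
`X, Y, Z` lie on one curve `a |z|² + b re z + c = 0`: a hyperbolic line. -/
def collinearDet (X Y Z : ℍ) : ℝ :=
  X.re * (Y.re ^ 2 + Y.im ^ 2 - Z.re ^ 2 - Z.im ^ 2) +
    Y.re * (Z.re ^ 2 + Z.im ^ 2 - X.re ^ 2 - X.im ^ 2) +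
    Z.re * (X.re ^ 2 + X.im ^ 2 - Y.re ^ 2 - Y.im ^ 2)

lemma collinearDet_rotate (X Y Z : ℍ) : collinearDet Y Z X = collinearDet X Y Z := by
  unfold collinearDet; ring

lemma collinearDet_swap (X Y Z : ℍ) : collinearDet X Z Y = -collinearDet X Y Z := by
  unfold collinearDet; ring

/-- The bracket is minus the Gram determinant of `P, Q, R` in the hyperboloid model. -/
lemma collinearDet_sq (P Q R : ℍ) :
    collinearDet P Q R ^ 2 = 4 * (P.im * Q.im * R.im) ^ 2 *
      ((cosh (dist P Q) ^ 2 - 1) * (cosh (dist Q R) ^ 2 - 1) -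
        (cosh (dist P R) - cosh (dist P Q) * cosh (dist Q R)) ^ 2) := by
  have := P.im_pos; have := Q.im_pos; have := R.im_pos
  rw [cosh_dist', cosh_dist', cosh_dist', collinearDet]
  field_simp
  ring

lemma collinearDet_eq_zero_of_hBtw {P Q R : ℍ} (h : HBtw P Q R) : collinearDet P Q R = 0 := by
  have hsq := collinearDet_sq P Q R
  rw [← h, sq_cosh_add_sub_mul, sub_self, mul_zero] at hsq
  exact pow_eq_zero_iff two_ne_zero |>.1 hsq

lemma collinearDet_eq_zero_of_hCollinear {X Y Z : ℍ} (h : HCollinear X Y Z) :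
    collinearDet X Y Z = 0 := by
  rcases h with h | h | h
  · rw [← neg_eq_zero, ← collinearDet_swap]
    exact collinearDet_eq_zero_of_hBtw h
  · rw [collinearDet_rotate Z X Y]
    exact collinearDet_eq_zero_of_hBtw h
  · exact collinearDet_eq_zero_of_hBtw h

lemma sinh_infDist_imAxis (z : ℍ) : sinh (Metric.infDist z imAxis) = |z.re| / z.im := by
  have hz := z.im_pos
  have hn := sq_norm_coe z
  have hn0 : 0 < ‖(z : ℂ)‖ := norm_pos_iff.2 z.ne_zero
  let foot : ℍ := mk ⟨0, ‖(z : ℂ)‖⟩ hn0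
  have hfoot : foot ∈ imAxis := rfl
  have hcosh_foot : cosh (dist z foot) = ‖(z : ℂ)‖ / z.im := by
    rw [cosh_dist']
    change ((z.re - 0) ^ 2 + z.im ^ 2 + ‖(z : ℂ)‖ ^ 2) / (2 * z.im * ‖(z : ℂ)‖) = _
    field_simp
    linear_combination -hn
  have hinf : Metric.infDist z imAxis = dist z foot := by
    refine Metric.infDist_eq_dist_of_forall_le hfoot fun w (hw : w.re = 0) => ?_
    have hw0 := w.im_pos
    have hle : cosh (dist z foot) ≤ cosh (dist z w) := by
      rw [hcosh_foot, cosh_dist', hw, div_le_div_iff₀ (by positivity) (by positivity)]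
      nlinarith [mul_nonneg hz.le (sq_nonneg (‖(z : ℂ)‖ - w.im))]
    rwa [cosh_le_cosh, abs_of_nonneg dist_nonneg, abs_of_nonneg dist_nonneg] at hle
  rw [hinf]
  refine (pow_left_inj₀ (sinh_nonneg_iff.2 dist_nonneg) (by positivity) two_ne_zero).1 ?_
  rw [sinh_sq, hcosh_foot, div_pow, div_pow, sq_abs]
  field_simp
  linear_combination hn

lemma sinh_dist_sq_of_mem_imAxis (P : ℍ) {Z : ℍ} (hZ : Z ∈ imAxis) :
    sinh (dist P Z) ^ 2 =
      ((P.re ^ 2 + P.im ^ 2 - Z.im ^ 2) ^ 2 + (2 * Z.im * P.re) ^ 2) / (2 * P.im * Z.im) ^ 2 := by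
  have := P.im_pos; have := Z.im_pos
  rw [sinh_sq, cosh_dist', hZ]
  field_simp
  ring

lemma abs_re_div_im_mul_sinh_dist_comm {X Y Z : ℍ} (hZ : Z ∈ imAxis) (h : HCollinear X Y Z) :
    |X.re| / X.im * sinh (dist Y Z) = |Y.re| / Y.im * sinh (dist X Z) := by
  have := X.im_pos; have := Y.im_pos; have := Z.im_pos
  have hdet := collinearDet_eq_zero_of_hCollinear h
  rw [collinearDet, hZ] at hdet
  refine (pow_left_inj₀ (by positivity) (by positivity) two_ne_zero).1 ?_
  rw [mul_pow, mul_pow, div_pow, div_pow, sq_abs, sq_abs, sinh_dist_sq_of_mem_imAxis _ hZ,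
    sinh_dist_sq_of_mem_imAxis _ hZ]
  field_simp
  linear_combination
    (X.re * (Y.re ^ 2 + Y.im ^ 2 - Z.im ^ 2) + Y.re * (X.re ^ 2 + X.im ^ 2 - Z.im ^ 2)) * hdet

lemma exists_hBtw_mul_sinh_dist_eq_of_mem_imAxis {X Y : ℍ} (hX : X ∈ imAxis) (hY : Y ∈ imAxis)
    {x y : ℝ} (hx : 0 ≤ x) (hy : 0 ≤ y) :
    ∃ Z ∈ imAxis, HBtw X Z Y ∧ x * sinh (dist X Z) = y * sinh (dist Y Z) := by
  let γ (s : ℝ) : ℍ := mk ⟨0, exp s⟩ (exp_pos s)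
  have hγ : Isometry γ := isometry_vertical_line 0
  have hγ_log : ∀ P ∈ imAxis, γ (log P.im) = P := fun P hP =>
    ext_re_im hP.symm (exp_log P.im_pos)
  obtain ⟨v, hv, hmom⟩ := hγ.exists_mul_sinh_dist_eq (log X.im) (log Y.im) hx hy
  have hbtw := hγ.dist_add_dist_of_mem_uIcc hv
  rw [hγ_log X hX, hγ_log Y hY] at hmom hbtw
  exact ⟨γ v, rfl, hbtw, hmom⟩

lemma UpperHalfPlane.coe_smul_of_coe_eq {g : SL(2, ℝ)} {a b c d : ℝ}
    (hg : (g : Matrix (Fin 2) (Fin 2) ℝ) = !![a, b; c, d]) (z : ℍ) :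
    ((g • z : ℍ) : ℂ) = (a * z + b) / (c * z + d) := by
  rw [coe_specialLinearGroup_apply]
  simp [hg]

lemma HLine.mem_circle_carrier_iff {c r : ℝ} (hr : 0 < r) {z : ℍ} :
    z ∈ (HLine.circle c r hr).carrier ↔ (z.re - c) ^ 2 + z.im ^ 2 = r ^ 2 := by
  rw [HLine.carrier, Set.mem_ofPred_eq, ← pow_left_inj₀ (norm_nonneg _) hr.le two_ne_zero,
    Complex.sq_norm, Complex.normSq_apply]
  simp only [Complex.sub_re, Complex.sub_im, Complex.ofReal_re, Complex.ofReal_im, coe_re, coe_im,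
    sub_zero]
  ring_nf

lemma HLine.re_div_eq_zero_iff_mem_circle {c r : ℝ} (hr : 0 < r) (z : ℍ) :
    ((z - c + r) / (r + c - z) : ℂ).re = 0 ↔ z ∈ (HLine.circle c r hr).carrier := by
  have hden : (r + c - z : ℂ) ≠ 0 := fun h => by
    have := congrArg Complex.im h
    simp only [Complex.sub_im, Complex.add_im, Complex.ofReal_im, Complex.zero_im, coe_im] at this
    linarith [z.im_pos]
  have hnum :
      (z - c + r : ℂ).re * (r + c - z : ℂ).re + (z - c + r : ℂ).im * (r + c - z : ℂ).im =
        r ^ 2 - ((z.re - c) ^ 2 + z.im ^ 2) := by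
    simp only [Complex.add_re, Complex.add_im, Complex.sub_re, Complex.sub_im, Complex.ofReal_re,
      Complex.ofReal_im, coe_re, coe_im]
    ring
  rw [Complex.div_re, ← add_div, div_eq_zero_iff, or_iff_left (Complex.normSq_pos.2 hden).ne',
    hnum, sub_eq_zero, eq_comm, HLine.mem_circle_carrier_iff]

lemma HLine.exists_smul_carrier_eq_imAxis (ℓ : HLine) :
    ∃ g : SL(2, ℝ), g • ℓ.carrier = imAxis := by
  suffices ∃ g : SL(2, ℝ), ∀ z : ℍ, (g • z).re = 0 ↔ z ∈ ℓ.carrier by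
    obtain ⟨g, hg⟩ := this
    refine ⟨g, Set.ext fun w => ?_⟩
    rw [Set.mem_smul_set_iff_inv_smul_mem, ← hg, smul_inv_smul]
    rfl
  cases ℓ with
  | vertical a =>
    let g : SL(2, ℝ) := ⟨!![1, -a; 0, 1], by rw [Matrix.det_fin_two_of]; ring⟩
    refine ⟨g, fun z => ?_⟩
    rw [← coe_re, coe_smul_of_coe_eq (g := g) rfl]
    simp [HLine.carrier, ← sub_eq_add_neg, sub_eq_zero]
  | circle c r hr =>
    -- the Möbius map `z ↦ 2r (z - c + r) / (r + c - z)` sends `c - r ↦ 0` and `c + r ↦ ∞`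
    let g : SL(2, ℝ) := ⟨!![1, r - c; -(2 * r)⁻¹, (r + c) / (2 * r)], by
      rw [Matrix.det_fin_two_of]; field_simp; ring⟩
    refine ⟨g, fun z => ?_⟩
    have hgz : ((g • z : ℍ) : ℂ) = ((2 * r : ℝ) : ℂ) * ((z - c + r) / (r + c - z)) := by
      have hr' : (r : ℂ) ≠ 0 := Complex.ofReal_ne_zero.2 hr.ne'
      have hden : -(2 * (r : ℂ))⁻¹ * z + (r + c) / (2 * r) = (r + c - z) / (2 * r) := by
        field_simp
        ring
      rw [coe_smul_of_coe_eq (g := g) rfl]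
      push_cast
      rw [hden, div_div_eq_mul_div, mul_div_assoc]
      ring
    rw [← coe_re, hgz, Complex.re_ofReal_mul, mul_eq_zero, or_iff_right (by positivity),
      HLine.re_div_eq_zero_iff_mem_circle]

section Invariance

variable {G : Type*} [SMul G ℍ] [IsIsometricSMul G ℍ] (g : G) {X Y Z : ℍ}

lemma hBtw_smul_iff : HBtw (g • X) (g • Z) (g • Y) ↔ HBtw X Z Y := by
  simp only [HBtw, dist_smul]

lemma hCollinear_smul_iff : HCollinear (g • X) (g • Y) (g • Z) ↔ HCollinear X Y Z := by
  simp only [HCollinear, hBtw_smul_iff]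

end Invariance

theorem equal_moments_iff_imAxis_through_centroid {X Y : ℍ} {x y : ℝ} (hx : 0 < x) (hy : 0 < y)
    (hmeet : ∃ W ∈ imAxis, HCollinear X Y W) :
    x * sinh (Metric.infDist X imAxis) = y * sinh (Metric.infDist Y imAxis) ↔
      ∃ Z ∈ imAxis, HCollinear X Y Z ∧ x * sinh (dist X Z) = y * sinh (dist Y Z) := by
  have hXim := X.im_pos
  have hYim := Y.im_pos
  rw [sinh_infDist_imAxis, sinh_infDist_imAxis]
  constructor
  · intro h
    by_cases hX : X ∈ imAxis
    · have hY : Y.re = 0 := by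
        rw [show X.re = 0 from hX, abs_zero, zero_div, mul_zero, eq_comm] at h
        simpa [hy.ne', hYim.ne'] using h
      obtain ⟨Z, hZ, hXZY, hmom⟩ := exists_hBtw_mul_sinh_dist_eq_of_mem_imAxis hX hY hx.le hy.le
      exact ⟨Z, hZ, Or.inl hXZY, hmom⟩
    · obtain ⟨W, hW, hcol⟩ := hmeet
      have htr := abs_re_div_im_mul_sinh_dist_comm hW hcol
      have hmY : 0 < |Y.re| / Y.im := by
        have : 0 < x * (|X.re| / X.im) := by
          have : X.re ≠ 0 := hX
          positivity
        rw [h] at this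
        exact pos_of_mul_pos_right this hy.le
      refine ⟨W, hW, hcol, mul_right_cancel₀ hmY.ne' ?_⟩
      linear_combination sinh (dist Y W) * h - x * htr
  · rintro ⟨Z, hZ, hcol, hmom⟩
    have htr := abs_re_div_im_mul_sinh_dist_comm hZ hcol
    rcases (sinh_nonneg_iff.2 (dist_nonneg (x := Y) (y := Z))).eq_or_lt with hYZ | hYZ
    · have hXZ : sinh (dist X Z) = 0 := by
        rw [← hYZ, mul_zero, mul_eq_zero] at hmom
        exact hmom.resolve_left hx.ne'
      rw [dist_eq_zero.1 (sinh_eq_zero.1 hXZ), dist_eq_zero.1 (sinh_eq_zero.1 hYZ.symm)]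
      simp [show Z.re = 0 from hZ]
    · refine mul_right_cancel₀ hYZ.ne' ?_
      linear_combination x * htr + |Y.re| / Y.im * hmom

theorem equal_moments_iff_line_through_centroid_general (X Y : ℍ)
    (x y : ℝ) (hx : 0 < x) (hy : 0 < y) (ℓ : HLine)
    (hmeet : ∃ W : ℍ, W ∈ ℓ.carrier ∧ (HBtw X W Y ∨ HBtw W X Y ∨ HBtw X Y W)) :
    x * Real.sinh (Metric.infDist X ℓ.carrier)
      = y * Real.sinh (Metric.infDist Y ℓ.carrier) ↔
    ∃ Z : ℍ, Z ∈ ℓ.carrier ∧ (HBtw X Z Y ∨ HBtw Z X Y ∨ HBtw X Y Z) ∧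
      x * Real.sinh (dist X Z) = y * Real.sinh (dist Y Z) := by
  obtain ⟨g, hg⟩ := ℓ.exists_smul_carrier_eq_imAxis
  have hinf (P : ℍ) : Metric.infDist P ℓ.carrier = Metric.infDist (g • P) imAxis := by
    rw [← hg, ← Set.image_smul, Metric.infDist_image (isometry_smul ℍ g)]
  have hmem (P : ℍ) : P ∈ ℓ.carrier ↔ g • P ∈ imAxis := by
    rw [← hg, Set.smul_mem_smul_set_iff]
  obtain ⟨W, hW, hWXY⟩ := hmeet
  rw [hinf, hinf, equal_moments_iff_imAxis_through_centroid hx hy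
    ⟨g • W, (hmem W).1 hW, (hCollinear_smul_iff g).2 hWXY⟩,
    (MulAction.bijective g).surjective.exists]
  simp only [← hmem, hCollinear_smul_iff, dist_smul]
  rfl

/-- Proposition 3.2: two point-masses `(X,x)`, `(Y,y)` have equal unsigned moments
with respect to a line `m` that meets the line `XY` if and only if `m` contains one
of their (internal or external) centroids, i.e. a point `Z` on the line `XY` with
`x·sinh d(X,Z) = y·sinh d(Y,Z)`. -/
theorem equal_moments_iff_line_through_centroid (X Y : ℍ) (hXY : X ≠ Y)
    (x y : ℝ) (hx : 0 < x) (hy : 0 < y) (ℓ : HLine)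
    (hmeet : ∃ W : ℍ, W ∈ ℓ.carrier ∧ (HBtw X W Y ∨ HBtw W X Y ∨ HBtw X Y W)) :
    x * Real.sinh (Metric.infDist X ℓ.carrier)
      = y * Real.sinh (Metric.infDist Y ℓ.carrier) ↔
    ∃ Z : ℍ, Z ∈ ℓ.carrier ∧ (HBtw X Z Y ∨ HBtw Z X Y ∨ HBtw X Y Z) ∧
      x * Real.sinh (dist X Z) = y * Real.sinh (dist Y Z) :=
  equal_moments_iff_line_through_centroid_general X Y x y hx hy ℓ hmeet
end
end

section
/- Let L be a lamina (compact region of positive finite area with continuous nonnegative density λ, of positive total mass) in the hyperbolic plane, and let m1, m2, m3 be three lines through a common point P. If the moment of L with respect to m1 and with respect to m2 are both zero, then the moment of L with respect to m3 is also zero. -/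
/-!
The signed hyperbolic sine of the distance from `z = x + iy` to a line `m` is `E_m(z) / y`, where
`E_m(z) = A |z|² + B x + C` is a suitably normalized equation of `m`; this is checked by locating
the foot of the perpendicular. Hence the moment about `m` depends linearly on `(A, B, C)`. The
triples of the lines through `P` are orthogonal to `(|P|², re P, 1)`, and those of two distinct
such lines are independent, so the moment about `m₃` is a combination of those about `m₁`, `m₂`.
-/

open Real UpperHalfPlane

noncomputable section

open MeasureTheory

instance : MeasurableSpace ℍ := borel ℍ

/-- Hyperbolic area measure on the upper half-plane: `dA = dx dy / y²`. -/
def hypArea : Measure ℍ :=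
  Measure.comap (fun z : ℍ => (z : ℂ))
    (volume.withDensity fun w : ℂ => ENNReal.ofReal ((w.im ^ 2)⁻¹))

instance : BorelSpace ℍ := ⟨rfl⟩

instance : IsFiniteMeasureOnCompacts hypArea where
  lt_top_of_isCompact K hK := by
    have hK' : IsCompact ((↑) '' K : Set ℂ) := hK.image continuous_coe
    rw [hypArea, isOpenEmbedding_coe.measurableEmbedding.comap_apply,
      withDensity_apply _ hK'.measurableSet]
    refine IntegrableOn.setLIntegral_lt_top (ContinuousOn.integrableOn_compact hK' ?_)
    refine (Complex.continuous_im.pow 2).continuousOn.inv₀ ?_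
    rintro _ ⟨z, -, rfl⟩
    exact pow_ne_zero _ z.im_ne_zero

lemma Real.sign_mul_abs (x : ℝ) : Real.sign x * |x| = x := by
  rcases lt_trichotomy x 0 with h | rfl | h
  · rw [Real.sign_of_neg h, abs_of_neg h]; ring
  · simp
  · rw [Real.sign_of_pos h, abs_of_pos h, one_mul]

lemma Real.sign_mul_of_pos (x : ℝ) {k : ℝ} (hk : 0 < k) : Real.sign (x * k) = Real.sign x := by
  rcases lt_trichotomy x 0 with h | rfl | h
  · rw [Real.sign_of_neg h, Real.sign_of_neg (mul_neg_of_neg_of_pos h hk)]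
  · simp
  · rw [Real.sign_of_pos h, Real.sign_of_pos (mul_pos h hk)]

lemma UpperHalfPlane.sinh_infDist_eq_abs {z w₀ : ℍ} {S : Set ℍ} {V E : ℝ} (hw₀ : w₀ ∈ S)
    (hV : Real.cosh (dist z w₀) = V) (hmin : ∀ w ∈ S, V ≤ Real.cosh (dist z w))
    (hE : V ^ 2 = 1 + E ^ 2) :
    Real.sinh (Metric.infDist z S) = |E| := by
  subst hV
  have hinf : Metric.infDist z S = dist z w₀ := by
    refine le_antisymm (Metric.infDist_le_dist_of_mem hw₀) ?_
    refine (Metric.le_infDist ⟨w₀, hw₀⟩).2 fun w hw => ?_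
    simpa [Real.cosh_le_cosh] using hmin w hw
  rw [hinf, ← sq_eq_sq₀ (Real.sinh_nonneg_iff.2 dist_nonneg) (abs_nonneg E), sq_abs]
  linear_combination hE - Real.cosh_sq (dist z w₀)

lemma UpperHalfPlane.norm_coe_sub_ofReal_sq (w : ℍ) (c : ℝ) :
    ‖(w : ℂ) - c‖ ^ 2 = (w.re - c) ^ 2 + w.im ^ 2 := by
  rw [Complex.sq_norm, Complex.normSq_apply]
  simp only [Complex.sub_re, Complex.sub_im, Complex.ofReal_re, Complex.ofReal_im, coe_re,
    coe_im, sub_zero, ← sq]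

namespace HLine

lemma mem_circle_iff {c r : ℝ} (hr : 0 < r) {w : ℍ} :
    w ∈ (circle c r hr).carrier ↔ (w.re - c) ^ 2 + w.im ^ 2 = r ^ 2 := by
  change ‖(w : ℂ) - c‖ = r ↔ _
  rw [← sq_eq_sq₀ (norm_nonneg _) hr.le, norm_coe_sub_ofReal_sq]

lemma sinh_infDist_vertical (a : ℝ) (z : ℍ) :
    Real.sinh (Metric.infDist z (vertical a).carrier) = |(z.re - a) / z.im| := by
  have hy := z.im_pos
  set ρ := √((z.re - a) ^ 2 + z.im ^ 2)
  have hρ : ρ ^ 2 = (z.re - a) ^ 2 + z.im ^ 2 := Real.sq_sqrt (by positivity)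
  have hρ0 : 0 < ρ := Real.sqrt_pos.2 (by positivity)
  -- the foot of the perpendicular from `z` is `a + iρ`
  refine sinh_infDist_eq_abs (w₀ := mk ⟨a, ρ⟩ hρ0) (V := ρ / z.im) rfl ?_ ?_ ?_
  · rw [cosh_dist']
    change ((z.re - a) ^ 2 + z.im ^ 2 + ρ ^ 2) / (2 * z.im * ρ) = _
    field_simp
    linear_combination -hρ
  · rintro w (hw : w.re = a)
    have hw_im := w.im_pos
    rw [cosh_dist', hw, div_le_div_iff₀ hy (by positivity)]
    nlinarith [sq_nonneg (ρ - w.im)]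
  · field_simp
    linear_combination hρ

lemma sinh_infDist_circle (c r : ℝ) (hr : 0 < r) (z : ℍ) :
    Real.sinh (Metric.infDist z (circle c r hr).carrier) =
      |((z.re - c) ^ 2 + z.im ^ 2 - r ^ 2) / (2 * r) / z.im| := by
  have hy := z.im_pos
  set u := z.re - c
  set S := u ^ 2 + z.im ^ 2 + r ^ 2 with hSdef
  have hS : 0 < S := by positivity
  have hdisc : S ^ 2 - 4 * u ^ 2 * r ^ 2 =
      (u ^ 2 + z.im ^ 2 - r ^ 2) ^ 2 + 4 * r ^ 2 * z.im ^ 2 := by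
    ring
  set T := √(S ^ 2 - 4 * u ^ 2 * r ^ 2)
  have hT : T ^ 2 = S ^ 2 - 4 * u ^ 2 * r ^ 2 := Real.sq_sqrt (by rw [hdisc]; positivity)
  have hT0 : 0 < T := Real.sqrt_pos.2 (by rw [hdisc]; positivity)
  -- the foot of the perpendicular is `c + r (2ur, T) / S`, and `(2ur, T)` has norm `S`
  have hq : 0 < r * T / S := by positivity
  refine sinh_infDist_eq_abs (w₀ := mk ⟨c + 2 * u * r ^ 2 / S, r * T / S⟩ hq)
    (V := T / (2 * r * z.im)) ?_ ?_ ?_ ?_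
  · rw [mem_circle_iff]
    change (c + 2 * u * r ^ 2 / S - c) ^ 2 + (r * T / S) ^ 2 = r ^ 2
    field_simp
    linear_combination r ^ 2 * hT
  · rw [cosh_dist']
    change ((z.re - (c + 2 * u * r ^ 2 / S)) ^ 2 + z.im ^ 2 + (r * T / S) ^ 2) /
      (2 * z.im * (r * T / S)) = _
    field_simp
    linear_combination (r ^ 2 - S) * hT + S ^ 2 * hSdef
  · intro w hw
    rw [mem_circle_iff] at hw
    have hw_im := w.im_pos
    have hnum : (z.re - w.re) ^ 2 + z.im ^ 2 + w.im ^ 2 = S - 2 * u * (w.re - c) := by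
      linear_combination hw
    -- Cauchy–Schwarz for `(2ur, T)` and `(w.re - c, w.im)`, of norms `S` and `r`
    have hCS : 2 * u * r * (w.re - c) + T * w.im ≤ S * r := by
      refine le_of_pow_le_pow_left₀ two_ne_zero (by positivity) ?_
      have : (2 * u * r * (w.re - c) + T * w.im) ^ 2 + (2 * u * r * w.im - T * (w.re - c)) ^ 2
          = (S * r) ^ 2 := by
        linear_combination ((w.re - c) ^ 2 + w.im ^ 2) * hT + S ^ 2 * hw
      nlinarith [sq_nonneg (2 * u * r * w.im - T * (w.re - c))]
    rw [cosh_dist', hnum, div_le_div_iff₀ (by positivity) (by positivity)]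
    nlinarith
  · field_simp
    linear_combination hT

/-- Coefficients `(A, B, C)` of the equation `A |z|² + B re z + C = 0` of a line, normalized so
that `eqn m z / im z` below is the signed `sinh` of the distance from `z` to `m`. -/
def coeffA : HLine → ℝ
  | vertical _ => 0
  | circle _ r _ => (2 * r)⁻¹

def coeffB : HLine → ℝ
  | vertical _ => 1
  | circle c r _ => -c / r

def coeffC : HLine → ℝ
  | vertical a => -a
  | circle c r _ => (c ^ 2 - r ^ 2) / (2 * r)

def eqn (m : HLine) (z : ℍ) : ℝ :=
  m.coeffA * (z.re ^ 2 + z.im ^ 2) + m.coeffB * z.re + m.coeffC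

lemma eqn_vertical (a : ℝ) (z : ℍ) : (vertical a).eqn z = z.re - a := by
  simp only [eqn, coeffA, coeffB, coeffC]
  ring

lemma eqn_circle (c r : ℝ) (hr : 0 < r) (z : ℍ) :
    (circle c r hr).eqn z = ((z.re - c) ^ 2 + z.im ^ 2 - r ^ 2) / (2 * r) := by
  simp only [eqn, coeffA, coeffB, coeffC]
  field_simp
  ring

lemma continuous_eqn (m : HLine) : Continuous m.eqn := by
  unfold eqn
  fun_prop

lemma eqn_eq_zero_of_mem {m : HLine} {z : ℍ} (hz : z ∈ m.carrier) : m.eqn z = 0 := by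
  cases m with
  | vertical a =>
    rw [eqn_vertical, sub_eq_zero]
    exact hz
  | circle c r hr =>
    rw [eqn_circle, (mem_circle_iff hr).1 hz, sub_self, zero_div]

lemma sgn_eq_sign_eqn (m : HLine) (z : ℍ) : m.sgn z = Real.sign (m.eqn z) := by
  cases m with
  | vertical a => rw [eqn_vertical]; rfl
  | circle c r hr =>
    set t := ‖(z : ℂ) - c‖
    have : ((z.re - c) ^ 2 + z.im ^ 2 - r ^ 2) / (2 * r) = (t - r) * ((t + r) / (2 * r)) := by
      rw [← norm_coe_sub_ofReal_sq]
      ring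
    rw [eqn_circle, this, Real.sign_mul_of_pos _ (by positivity)]
    rfl

lemma sinh_infDist_carrier (m : HLine) (z : ℍ) :
    Real.sinh (Metric.infDist z m.carrier) = |m.eqn z / z.im| := by
  cases m with
  | vertical a => rw [sinh_infDist_vertical, eqn_vertical]
  | circle c r hr => rw [sinh_infDist_circle, eqn_circle]

lemma sgn_mul_sinh_infDist (m : HLine) (z : ℍ) :
    m.sgn z * Real.sinh (Metric.infDist z m.carrier) = m.eqn z / z.im := by
  rw [sinh_infDist_carrier, sgn_eq_sign_eqn, abs_div, abs_of_pos z.im_pos, ← mul_div_assoc,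
    Real.sign_mul_abs]

lemma coeff_det_ne_zero {m₁ m₂ : HLine} {P : ℍ} (hne : m₁ ≠ m₂) (hP₁ : P ∈ m₁.carrier)
    (hP₂ : P ∈ m₂.carrier) : m₁.coeffA * m₂.coeffB - m₂.coeffA * m₁.coeffB ≠ 0 := by
  cases m₁ with
  | vertical a₁ =>
    cases m₂ with
    | vertical a₂ =>
      obtain rfl : a₁ = a₂ := (show P.re = a₁ from hP₁).symm.trans hP₂
      exact absurd rfl hne
    | circle c r hr => simp [coeffA, coeffB, hr.ne']
  | circle c₁ r₁ hr₁ =>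
    cases m₂ with
    | vertical a => simp [coeffA, coeffB, hr₁.ne']
    | circle c₂ r₂ hr₂ =>
      intro hdet
      obtain rfl : c₁ = c₂ := by
        simp only [coeffA, coeffB] at hdet
        field_simp at hdet
        linarith
      rw [mem_circle_iff] at hP₁ hP₂
      obtain rfl : r₁ = r₂ := (pow_left_inj₀ hr₁.le hr₂.le two_ne_zero).1 (hP₁.symm.trans hP₂)
      exact hne rfl

lemma exists_eqn_eq_add {m₁ m₂ m₃ : HLine} {P : ℍ} (hne : m₁ ≠ m₂) (hP₁ : P ∈ m₁.carrier)
    (hP₂ : P ∈ m₂.carrier) (hP₃ : P ∈ m₃.carrier) :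
    ∃ s t : ℝ, ∀ z, m₃.eqn z = s * m₁.eqn z + t * m₂.eqn z := by
  have hdet := coeff_det_ne_zero hne hP₁ hP₂
  -- Cramer's rule
  obtain ⟨s, t, hA, hB⟩ : ∃ s t : ℝ, m₃.coeffA = s * m₁.coeffA + t * m₂.coeffA ∧
      m₃.coeffB = s * m₁.coeffB + t * m₂.coeffB := by
    refine ⟨(m₃.coeffA * m₂.coeffB - m₂.coeffA * m₃.coeffB) /
      (m₁.coeffA * m₂.coeffB - m₂.coeffA * m₁.coeffB),
      (m₁.coeffA * m₃.coeffB - m₃.coeffA * m₁.coeffB) /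
      (m₁.coeffA * m₂.coeffB - m₂.coeffA * m₁.coeffB), ?_, ?_⟩ <;>
    rw [div_mul_eq_mul_div, div_mul_eq_mul_div, ← add_div, eq_div_iff hdet] <;> ring
  have e₁ := eqn_eq_zero_of_mem hP₁
  have e₂ := eqn_eq_zero_of_mem hP₂
  have e₃ := eqn_eq_zero_of_mem hP₃
  simp only [eqn] at e₁ e₂ e₃
  have hC : m₃.coeffC = s * m₁.coeffC + t * m₂.coeffC := by
    rw [hA, hB] at e₃
    linear_combination e₃ - s * e₁ - t * e₂
  refine ⟨s, t, fun z => ?_⟩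
  simp only [eqn, hA, hB, hC]
  ring

end HLine

theorem lamina_moments_concurrent_general (K : Set ℍ) (hK : IsCompact K)
    (lam : ℍ → ℝ) (hcont : Continuous lam)
    (P : ℍ) (m₁ m₂ m₃ : HLine) (hne : m₁ ≠ m₂)
    (hP₁ : P ∈ m₁.carrier) (hP₂ : P ∈ m₂.carrier) (hP₃ : P ∈ m₃.carrier)
    (hM₁ : ∫ z in K, m₁.sgn z * lam z * Real.sinh (Metric.infDist z m₁.carrier) ∂hypArea = 0)
    (hM₂ : ∫ z in K, m₂.sgn z * lam z * Real.sinh (Metric.infDist z m₂.carrier) ∂hypArea = 0) :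
    ∫ z in K, m₃.sgn z * lam z * Real.sinh (Metric.infDist z m₃.carrier) ∂hypArea = 0 := by
  have moment_eq (m : HLine) :
      ∫ z in K, m.sgn z * lam z * Real.sinh (Metric.infDist z m.carrier) ∂hypArea =
        ∫ z in K, m.eqn z / z.im * lam z ∂hypArea := by
    simp_rw [mul_right_comm _ (lam _), HLine.sgn_mul_sinh_infDist]
  have integrable (m : HLine) : IntegrableOn (fun z => m.eqn z / z.im * lam z) K hypArea :=
    ((m.continuous_eqn.div continuous_im fun z => z.im_ne_zero).mul
      hcont).continuousOn.integrableOn_compact hK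
  obtain ⟨s, t, hm₃⟩ := HLine.exists_eqn_eq_add hne hP₁ hP₂ hP₃
  rw [moment_eq] at hM₁ hM₂ ⊢
  calc ∫ z in K, m₃.eqn z / z.im * lam z ∂hypArea
      = ∫ z in K, s * (m₁.eqn z / z.im * lam z) + t * (m₂.eqn z / z.im * lam z) ∂hypArea := by
        congr with z
        rw [hm₃]
        ring
    _ = 0 := by
        rw [integral_add ((integrable m₁).const_mul s) ((integrable m₂).const_mul t),
          integral_const_mul, integral_const_mul, hM₁, hM₂, mul_zero, mul_zero, add_zero]

/-- Theorem 4.2: let `(K, lam)` be a lamina (compact region with continuous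
nonnegative density of positive total mass), and let `m₁, m₂, m₃` be three lines
through a common point `P`, the first two distinct.  If the moments of the lamina
with respect to `m₁` and `m₂` vanish, so does its moment with respect to `m₃`. -/
theorem lamina_moments_concurrent (K : Set ℍ) (hK : IsCompact K)
    (lam : ℍ → ℝ) (hcont : Continuous lam) (hnn : ∀ z, 0 ≤ lam z)
    (hpos : 0 < ∫ z in K, lam z ∂hypArea)
    (P : ℍ) (m₁ m₂ m₃ : HLine) (hne : m₁ ≠ m₂)
    (hP₁ : P ∈ m₁.carrier) (hP₂ : P ∈ m₂.carrier) (hP₃ : P ∈ m₃.carrier)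
    (hM₁ : ∫ z in K, m₁.sgn z * lam z * Real.sinh (Metric.infDist z m₁.carrier) ∂hypArea = 0)
    (hM₂ : ∫ z in K, m₂.sgn z * lam z * Real.sinh (Metric.infDist z m₂.carrier) ∂hypArea = 0) :
    ∫ z in K, m₃.sgn z * lam z * Real.sinh (Metric.infDist z m₃.carrier) ∂hypArea = 0 :=
  lamina_moments_concurrent_general K hK lam hcont P m₁ m₂ m₃ hne hP₁ hP₂ hP₃ hM₁ hM₂
end
end

section
/- Let P_n(r) be the regular hyperbolic n-gon with in-radius r and side length a, with uniform density 1. Its mass equals (n·a·sinh r)/2, i.e., half the product of its perimeter with sinh(r). Equivalently, in the Gauss polar model with C = coth r, 2n·∫_0^{π/n} ∫_0^{arccoth(C cos θ)} cosh ρ sinh ρ dρ dθ = n·sinh(r)·artanh(tan(π/n)·sinh r) = (n a sinh r)/2. -/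
/-!
Integrating `cosh ρ sinh ρ` radially up to the side `ρ = arccoth (coth r · cos θ)` gives
`sinh² r / (2 (cos² θ - sinh² r · sin² θ))`, and `θ ↦ artanh (tan θ · sinh r)` is an
antiderivative of `sinh r / (cos² θ - sinh² r · sin² θ)`. Hence each of the `2n` half-sectors
of the polygon has mass `(sinh r / 2) · artanh (tan (π/n) · sinh r) = (sinh r / 2) · (a / 2)`.
-/

open Real Set Filter Topology

namespace Real

noncomputable def coth (x : ℝ) : ℝ := cosh x / sinh x

noncomputable def arccoth (t : ℝ) : ℝ := arsinh (√(t ^ 2 - 1))⁻¹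

theorem sinh_arccoth_sq {t : ℝ} (ht : 1 ≤ t ^ 2) : sinh (arccoth t) ^ 2 = (t ^ 2 - 1)⁻¹ := by
  rw [arccoth, sinh_arsinh, inv_pow, sq_sqrt (sub_nonneg.mpr ht)]

theorem coth_mul_cos_sq_sub_one {r : ℝ} (hr : r ≠ 0) (θ : ℝ) :
    (coth r * cos θ) ^ 2 - 1 = (cos θ ^ 2 - sinh r ^ 2 * sin θ ^ 2) / sinh r ^ 2 := by
  have hs : sinh r ≠ 0 := sinh_eq_zero.not.mpr hr
  rw [coth]
  field_simp
  linear_combination cos θ ^ 2 * cosh_sq r + sinh r ^ 2 * sin_sq_add_cos_sq θ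

theorem hasDerivAt_artanh {x : ℝ} (hx : x ∈ Ioo (-1) 1) :
    HasDerivAt artanh (1 - x ^ 2)⁻¹ x := by
  obtain ⟨hx₁, hx₂⟩ := hx
  have heq : (fun y => (log (1 + y) - log (1 - y)) / 2) =ᶠ[𝓝 x] artanh := by
    filter_upwards [isOpen_Ioo.mem_nhds ⟨hx₁, hx₂⟩] with y ⟨hy₁, hy₂⟩
    rw [artanh_eq_half_log ⟨hy₁.le, hy₂.le⟩, log_div (by linarith) (by linarith)]
    ring
  have hadd := ((hasDerivAt_id' x).const_add 1).log (by linarith)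
  have hsub := ((hasDerivAt_id' x).const_sub 1).log (by linarith)
  refine ((hadd.sub hsub).div_const 2).congr_of_eventuallyEq heq.symm |>.congr_deriv ?_
  have h₁ : 1 + x ≠ 0 := by linarith
  have h₂ : 1 - x ≠ 0 := by linarith
  rw [show 1 - x ^ 2 = (1 + x) * (1 - x) by ring]
  field_simp
  ring

end Real

theorem integral_cosh_mul_sinh (R : ℝ) :
    ∫ ρ in (0 : ℝ)..R, cosh ρ * sinh ρ = sinh R ^ 2 / 2 := by
  have hderiv (x : ℝ) : HasDerivAt (fun y => sinh y ^ 2 / 2) (cosh x * sinh x) x :=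
    (((hasDerivAt_sinh x).fun_pow 2).div_const 2).congr_deriv (by norm_num; ring)
  rw [intervalIntegral.integral_eq_sub_of_hasDerivAt (fun x _ => hderiv x)
    ((continuous_cosh.mul continuous_sinh).intervalIntegrable 0 R)]
  simp

theorem cos_sq_sub_sq_mul_sin_sq_eq {θ : ℝ} (hcos : cos θ ≠ 0) (s : ℝ) :
    cos θ ^ 2 - s ^ 2 * sin θ ^ 2 = cos θ ^ 2 * (1 - (tan θ * s) ^ 2) := by
  rw [tan_eq_sin_div_cos]
  field_simp

theorem cos_sq_sub_sq_mul_sin_sq_pos {θ s : ℝ} (hcos : cos θ ≠ 0) (h : |tan θ * s| < 1) :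
    0 < cos θ ^ 2 - s ^ 2 * sin θ ^ 2 := by
  rw [cos_sq_sub_sq_mul_sin_sq_eq hcos]
  exact mul_pos (sq_pos_of_ne_zero hcos) (sub_pos.mpr ((sq_lt_one_iff_abs_lt_one _).mpr h))

theorem abs_tan_mul_le_abs_tan_mul {θ β : ℝ} (hθ : 0 ≤ θ) (hθβ : θ ≤ β) (hβ : β < π / 2)
    (s : ℝ) : |tan θ * s| ≤ |tan β * s| := by
  rw [abs_mul, abs_mul, abs_of_nonneg (tan_nonneg_of_nonneg_of_le_pi_div_two hθ (by linarith)),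
    abs_of_nonneg (tan_nonneg_of_nonneg_of_le_pi_div_two (hθ.trans hθβ) hβ.le)]
  gcongr
  exact strictMonoOn_tan.monotoneOn ⟨by linarith [pi_pos], by linarith⟩
    ⟨by linarith [pi_pos], hβ⟩ hθβ

theorem hasDerivAt_artanh_tan_mul {θ s : ℝ} (hcos : cos θ ≠ 0) (h : |tan θ * s| < 1) :
    HasDerivAt (fun θ => artanh (tan θ * s)) (s / (cos θ ^ 2 - s ^ 2 * sin θ ^ 2)) θ := by
  refine (hasDerivAt_artanh (abs_lt.mp h)).comp θ ((hasDerivAt_tan hcos).mul_const s)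
    |>.congr_deriv ?_
  have hD : 1 - (tan θ * s) ^ 2 ≠ 0 := (sub_pos.mpr ((sq_lt_one_iff_abs_lt_one _).mpr h)).ne'
  rw [cos_sq_sub_sq_mul_sin_sq_eq hcos]
  field_simp

theorem integral_div_cos_sq_sub_sq_mul_sin_sq {β s : ℝ} (hβ₀ : 0 ≤ β) (hβ : β < π / 2)
    (h : |tan β * s| < 1) :
    ∫ θ in (0 : ℝ)..β, s / (cos θ ^ 2 - s ^ 2 * sin θ ^ 2) = artanh (tan β * s) := by
  have hcos : ∀ θ ∈ uIcc 0 β, cos θ ≠ 0 := fun θ hθ => by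
    rw [uIcc_of_le hβ₀] at hθ
    exact (cos_pos_of_mem_Ioo ⟨by linarith [pi_pos, hθ.1], by linarith [hθ.2]⟩).ne'
  have hlt : ∀ θ ∈ uIcc 0 β, |tan θ * s| < 1 := fun θ hθ => by
    rw [uIcc_of_le hβ₀] at hθ
    exact (abs_tan_mul_le_abs_tan_mul hθ.1 hθ.2 hβ s).trans_lt h
  have hint : ContinuousOn (fun θ => s / (cos θ ^ 2 - s ^ 2 * sin θ ^ 2)) (uIcc 0 β) :=
    continuousOn_const.div (by fun_prop) fun θ hθ =>
      (cos_sq_sub_sq_mul_sin_sq_pos (hcos θ hθ) (hlt θ hθ)).ne'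
  rw [intervalIntegral.integral_eq_sub_of_hasDerivAt
    (fun θ hθ => hasDerivAt_artanh_tan_mul (hcos θ hθ) (hlt θ hθ)) hint.intervalIntegrable]
  simp

theorem integral_integral_cosh_mul_sinh_arccoth {r β : ℝ} (hr : r ≠ 0) (hβ₀ : 0 ≤ β)
    (hβ : β < π / 2) (h : |tan β * sinh r| < 1) :
    ∫ θ in (0 : ℝ)..β, ∫ ρ in (0 : ℝ)..arccoth (coth r * cos θ), cosh ρ * sinh ρ
      = sinh r / 2 * artanh (tan β * sinh r) := by
  have hinner : EqOn (fun θ => ∫ ρ in (0 : ℝ)..arccoth (coth r * cos θ), cosh ρ * sinh ρ)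
      (fun θ => sinh r / 2 * (sinh r / (cos θ ^ 2 - sinh r ^ 2 * sin θ ^ 2))) (uIcc 0 β) := by
    intro θ hθ
    rw [uIcc_of_le hβ₀] at hθ
    dsimp only
    have hD := cos_sq_sub_sq_mul_sin_sq_pos
      (cos_pos_of_mem_Ioo ⟨by linarith [pi_pos, hθ.1], by linarith [hθ.2]⟩).ne'
      ((abs_tan_mul_le_abs_tan_mul hθ.1 hθ.2 hβ _).trans_lt h)
    have ht := coth_mul_cos_sq_sub_one hr θ
    rw [integral_cosh_mul_sinh,
      sinh_arccoth_sq (sub_nonneg.mp (ht ▸ div_nonneg hD.le (sq_nonneg _))), ht]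
    field_simp
  rw [intervalIntegral.integral_congr hinner, intervalIntegral.integral_const_mul,
    integral_div_cos_sq_sub_sq_mul_sin_sq hβ₀ hβ h]

theorem mass_of_regular_polygon_general (n : ℕ) (hn : 3 ≤ n) (r a : ℝ) (hr : 0 < r)
    (hside : Real.tanh (a / 2) = Real.tan (π / n) * Real.sinh r) :
    (2 * n) * ∫ θ in (0:ℝ)..(π / n),
        ∫ ρ in (0:ℝ)..(Real.arsinh (Real.sqrt
            ((Real.cosh r / Real.sinh r * Real.cos θ) ^ 2 - 1))⁻¹),
          Real.cosh ρ * Real.sinh ρ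
      = n * Real.sinh r *
          (Real.log ((1 + Real.tan (π / n) * Real.sinh r)
            / (1 - Real.tan (π / n) * Real.sinh r)) / 2) ∧
    (2 * n) * ∫ θ in (0:ℝ)..(π / n),
        ∫ ρ in (0:ℝ)..(Real.arsinh (Real.sqrt
            ((Real.cosh r / Real.sinh r * Real.cos θ) ^ 2 - 1))⁻¹),
          Real.cosh ρ * Real.sinh ρ
      = n * a * Real.sinh r / 2 := by
  have hβ : π / n < π / 2 :=
    div_lt_div_of_pos_left pi_pos two_pos (by exact_mod_cast (by omega : 2 < n))
  have hTs : |tan (π / n) * sinh r| < 1 := hside ▸ abs_lt.mpr ⟨neg_one_lt_tanh _, tanh_lt_one _⟩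
  have hmass := integral_integral_cosh_mul_sinh_arccoth hr.ne' (by positivity) hβ hTs
  simp only [coth, arccoth] at hmass
  refine ⟨?_, ?_⟩
  · rw [hmass, artanh_eq_half_log (Ioo_subset_Icc_self (abs_lt.mp hTs))]
    ring
  · rw [hmass, ← hside, artanh_tanh]
    ring

/-- Proposition 6.6: the mass of the uniform regular hyperbolic `n`-gon of in-radius
`r` and side length `a` is half the product of its perimeter with `sinh r`.  In the
Gauss polar model, with `C = coth r`, one side is `ρ = arccoth(C cos θ)`,
`−π/n ≤ θ ≤ π/n` (here `arccoth t = arsinh (1/√(t² − 1))` for `t > 1`), and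
`tanh(a/2) = tan(π/n)·sinh r`.  Since Mathlib lacks `artanh`, we write
`artanh t = log((1 + t)/(1 − t))/2`. -/
theorem mass_of_regular_polygon (n : ℕ) (hn : 3 ≤ n) (r a : ℝ) (hr : 0 < r)
    (ha : 0 < a) (hside : Real.tanh (a / 2) = Real.tan (π / n) * Real.sinh r) :
    (2 * n) * ∫ θ in (0:ℝ)..(π / n),
        ∫ ρ in (0:ℝ)..(Real.arsinh (Real.sqrt
            ((Real.cosh r / Real.sinh r * Real.cos θ) ^ 2 - 1))⁻¹),
          Real.cosh ρ * Real.sinh ρ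
      = n * Real.sinh r *
          (Real.log ((1 + Real.tan (π / n) * Real.sinh r)
            / (1 - Real.tan (π / n) * Real.sinh r)) / 2) ∧
    (2 * n) * ∫ θ in (0:ℝ)..(π / n),
        ∫ ρ in (0:ℝ)..(Real.arsinh (Real.sqrt
            ((Real.cosh r / Real.sinh r * Real.cos θ) ^ 2 - 1))⁻¹),
          Real.cosh ρ * Real.sinh ρ
      = n * a * Real.sinh r / 2 :=
  mass_of_regular_polygon_general n hn r a hr hside
end
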